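/- arXiv:2309.13733 — 2 statements merged into one kernel-verified Lean document; each statement's English description precedes it below -/
import Mathlib

section
/- Fix X, Hₖ, Wₖ and define g(W, H) = √(rₖ) + (‖X - WH‖_F² + ε - rₖ)/(2√rₖ) + λ[log det(Qₖ) + trace(Qₖ⁻¹(WᵀW + δI - Qₖ))], where rₖ = ‖X - WₖHₖ‖_F² + ε and Qₖ = WₖᵀWₖ + δI with δ > 0, λ ≥ 0, ε > 0. Then g(W, H) ≥ f_ε(W, H) for all nonnegative W, H, where f_ε(W, H) = √(‖X - WH‖_F² + ε) + λ·log det(WᵀW + δI), and g(Wₖ, Hₖ) = f_ε(Wₖ, Hₖ). -/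
open Matrix
noncomputable def frobNorm2 {m n : ℕ} (M : Matrix (Fin m) (Fin n) ℝ) : ℝ :=
  ∑ i, ∑ j, (M i j) ^ 2

/-!
Both terms of `g` are tangent-line upper bounds of concave functions at the current iterate.
The square root is concave, so `√y ≤ √r + (y - r) / (2√r)`. The map `Q ↦ log det Q` is concave on
positive definite matrices with gradient `Q⁻¹`: for `A = Q₀^{-1/2} Q Q₀^{-1/2}`, the scalar bound
`log t ≤ t - 1` on the eigenvalues of `A` gives `log det A ≤ tr A - r`, which unfolds to
`log det Q ≤ log det Q₀ + tr (Q₀⁻¹ (Q - Q₀))`. Both bounds are equalities at the tangent point.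
-/

theorem Real.sqrt_le_sqrt_add_div_two_mul_sqrt {a y : ℝ} (ha : 0 < a) (hy : 0 ≤ y) :
    √y ≤ √a + (y - a) / (2 * √a) := by
  have hsa : 0 < √a := Real.sqrt_pos.mpr ha
  have gap : √a + (y - a) / (2 * √a) - √y = (√y - √a) ^ 2 / (2 * √a) := by
    field_simp
    nlinarith [Real.sq_sqrt hy, Real.sq_sqrt ha.le]
  have : 0 ≤ (√y - √a) ^ 2 / (2 * √a) := by positivity
  linarith

theorem frobNorm2_nonneg {m n : ℕ} (M : Matrix (Fin m) (Fin n) ℝ) : 0 ≤ frobNorm2 M :=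
  Finset.sum_nonneg fun _ _ => Finset.sum_nonneg fun _ _ => sq_nonneg _

namespace Matrix

variable {n : Type*} [Fintype n] [DecidableEq n]

theorem PosDef.log_det_le_trace_sub_card {A : Matrix n n ℝ} (hA : A.PosDef) :
    Real.log A.det ≤ A.trace - Fintype.card n := by
  set μ := hA.isHermitian.eigenvalues
  have hdet : A.det = ∏ i, μ i := by simpa using hA.isHermitian.det_eq_prod_eigenvalues
  have htr : A.trace = ∑ i, μ i := by simpa using hA.isHermitian.trace_eq_sum_eigenvalues
  rw [hdet, htr, Real.log_prod fun i _ => (hA.eigenvalues_pos i).ne']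
  calc ∑ i, Real.log (μ i) ≤ ∑ i, (μ i - 1) :=
        Finset.sum_le_sum fun i _ => Real.log_le_sub_one_of_pos (hA.eigenvalues_pos i)
    _ = ∑ i, μ i - Fintype.card n := by simp [Finset.sum_sub_distrib]

open scoped MatrixOrder in
theorem PosDef.log_det_le_log_det_add_trace {Q Q₀ : Matrix n n ℝ} (hQ : Q.PosDef)
    (hQ₀ : Q₀.PosDef) : Real.log Q.det ≤ Real.log Q₀.det + (Q₀⁻¹ * (Q - Q₀)).trace := by
  set S := CFC.sqrt Q₀⁻¹
  have hS : S.IsHermitian := (CFC.sqrt_nonneg Q₀⁻¹).posSemidef.isHermitian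
  have hSS : S * S = Q₀⁻¹ := CFC.sqrt_mul_sqrt_self _ hQ₀.inv.posSemidef.nonneg
  have hdetS : S.det * S.det = Q₀.det⁻¹ := by
    rw [← det_mul, hSS, det_nonsing_inv, Ring.inverse_eq_inv']
  have hdetA : (S * Q * S).det = Q.det / Q₀.det := by
    rw [det_mul, det_mul, mul_right_comm, hdetS, div_eq_inv_mul]
  have hA : (S * Q * S).PosDef := by
    have hpsd := hQ.posSemidef.mul_mul_conjTranspose_same S
    rw [hS.eq] at hpsd
    exact hpsd.posDef_iff_det_ne_zero.mpr (hdetA ▸ (div_pos hQ.det_pos hQ₀.det_pos).ne')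
  have htrA : (S * Q * S).trace = (Q₀⁻¹ * Q).trace := by rw [trace_mul_cycle, hSS]
  have htr : (Q₀⁻¹ * (Q - Q₀)).trace = (Q₀⁻¹ * Q).trace - Fintype.card n := by
    rw [Matrix.mul_sub, trace_sub, nonsing_inv_mul _ hQ₀.det_pos.ne'.isUnit, trace_one]
  have key := hA.log_det_le_trace_sub_card
  rw [hdetA, Real.log_div hQ.det_pos.ne' hQ₀.det_pos.ne', htrA] at key
  linarith

theorem posDef_transpose_mul_self_add_smul_one {m : Type*} [Fintype m] (W : Matrix m n ℝ)
    {δ : ℝ} (hδ : 0 < δ) : (Wᵀ * W + δ • (1 : Matrix n n ℝ)).PosDef := by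
  have hgram := posSemidef_conjTranspose_mul_self W
  rw [conjTranspose_eq_transpose_of_trivial] at hgram
  exact PosDef.posSemidef_add hgram (PosDef.one.smul hδ)

end Matrix

theorem mm_majorization_prop {m n r : ℕ} (X : Matrix (Fin m) (Fin n) ℝ)
    (Wk : Matrix (Fin m) (Fin r) ℝ) (Hk : Matrix (Fin r) (Fin n) ℝ)
    (δ lam ε : ℝ) (hδ : 0 < δ) (hlam : 0 ≤ lam) (hε : 0 < ε)
    (fε : Matrix (Fin m) (Fin r) ℝ → Matrix (Fin r) (Fin n) ℝ → ℝ)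
    (hfε : ∀ W H, fε W H =
      Real.sqrt (frobNorm2 (X - W * H) + ε) +
        lam * Real.log (Wᵀ * W + δ • (1 : Matrix (Fin r) (Fin r) ℝ)).det)
    (rk : ℝ) (hrk : rk = frobNorm2 (X - Wk * Hk) + ε)
    (Qk : Matrix (Fin r) (Fin r) ℝ)
    (hQk : Qk = Wkᵀ * Wk + δ • (1 : Matrix (Fin r) (Fin r) ℝ))
    (g : Matrix (Fin m) (Fin r) ℝ → Matrix (Fin r) (Fin n) ℝ → ℝ)
    (hg : ∀ W H, g W H =
      Real.sqrt rk + (frobNorm2 (X - W * H) + ε - rk) / (2 * Real.sqrt rk) +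
        lam * (Real.log Qk.det +
          (Qk⁻¹ * (Wᵀ * W + δ • (1 : Matrix (Fin r) (Fin r) ℝ) - Qk)).trace)) :
    (∀ W H, (∀ i j, 0 ≤ W i j) → (∀ i j, 0 ≤ H i j) → fε W H ≤ g W H) ∧
      g Wk Hk = fε Wk Hk := by
  have hrk_pos : 0 < rk := hrk ▸ add_pos_of_nonneg_of_pos (frobNorm2_nonneg _) hε
  have hQk_pos : Qk.PosDef := hQk ▸ posDef_transpose_mul_self_add_smul_one Wk hδ
  refine ⟨fun W H _ _ => ?_, ?_⟩
  · have hsqrt := Real.sqrt_le_sqrt_add_div_two_mul_sqrt hrk_pos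
      (add_nonneg (frobNorm2_nonneg (X - W * H)) hε.le)
    have hlogdet := mul_le_mul_of_nonneg_left
      ((posDef_transpose_mul_self_add_smul_one W hδ).log_det_le_log_det_add_trace hQk_pos) hlam
    rw [hfε, hg]
    linarith
  · rw [hg, hfε, ← hrk, ← hQk]
    simp
end

section
/- Suppose P is symmetric positive definite and Q is symmetric positive definite, and log det Q = log det P + trace(P⁻¹(Q - P)). Then Q = P. -/
/-!
Write `P = R²` with `R = √P` and put `S = R⁻¹ Q R⁻¹`, a positive definite matrix with
`tr S = tr (P⁻¹ Q)` and `det S = det Q / det P`. In terms of the eigenvalues `μᵢ > 0` of `S`, the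
hypothesis says `∑ᵢ (μᵢ - 1 - log μᵢ) = 0`. Each summand is nonnegative and vanishes only at
`μᵢ = 1`, so `S = 1`, i.e. `Q = R R = P`.
-/

open Matrix
open scoped MatrixOrder ComplexOrder

theorem Real.eq_one_of_sum_sub_one_sub_log_eq_zero {ι : Type*} [Fintype ι] {x : ι → ℝ}
    (hx : ∀ i, 0 < x i) (h : ∑ i, (x i - 1 - Real.log (x i)) = 0) (i : ι) : x i = 1 := by
  have hnonneg : ∀ j ∈ Finset.univ, 0 ≤ x j - 1 - Real.log (x j) := fun j _ ↦
    sub_nonneg.mpr (Real.log_le_sub_one_of_pos (hx j))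
  have hi := (Finset.sum_eq_zero_iff_of_nonneg hnonneg).mp h i (Finset.mem_univ i)
  by_contra hne
  linarith [Real.log_lt_sub_one_of_pos (hx i) hne]

namespace Matrix

variable {ι : Type*} [Fintype ι] [DecidableEq ι]

theorem trace_inv_mul_mul_inv {R : Type*} [CommRing R] (A B : Matrix ι ι R) :
    (A⁻¹ * B * A⁻¹).trace = ((A * A)⁻¹ * B).trace := by
  rw [Matrix.mul_inv_rev, Matrix.trace_mul_cycle, Matrix.mul_assoc]

theorem det_inv_mul_mul_inv {K : Type*} [Field K] (A B : Matrix ι ι K) :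
    (A⁻¹ * B * A⁻¹).det = B.det / (A * A).det := by
  simp only [det_mul, det_nonsing_inv, Ring.inverse_eq_inv']
  ring

theorem eq_mul_self_of_inv_mul_mul_inv_eq_one {K : Type*} [Field K] {A B : Matrix ι ι K}
    (hA : IsUnit A.det) (h : A⁻¹ * B * A⁻¹ = 1) : B = A * A :=
  calc B = A * (A⁻¹ * B * A⁻¹) * A := by
        rw [Matrix.mul_assoc A, nonsing_inv_mul_cancel_right _ _ hA,
          mul_nonsing_inv_cancel_left _ _ hA]
    _ = A * A := by rw [h, Matrix.mul_one]

variable {𝕜 : Type*} [RCLike 𝕜]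

theorem PosDef.posDef_sqrt {A : Matrix ι ι 𝕜} (hA : A.PosDef) : (CFC.sqrt A).PosDef :=
  hA.isStrictlyPositive.sqrt.posDef

theorem PosDef.inv_mul_mul_inv {A B : Matrix ι ι 𝕜} (hA : A.PosDef) (hB : B.PosDef) :
    (A⁻¹ * B * A⁻¹).PosDef := by
  have := hA.inv.isUnit.posDef_star_right_conjugate_iff.mpr hB
  rwa [star_eq_conjTranspose, hA.inv.isHermitian.eq] at this

theorem IsHermitian.eq_one_of_eigenvalues_eq_one {A : Matrix ι ι 𝕜} (hA : A.IsHermitian)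
    (h : ∀ i, hA.eigenvalues i = 1) : A = 1 := by
  refine CFC.eq_one_of_spectrum_subset_one (R := ℝ) A ?_ hA.isSelfAdjoint
  rw [hA.spectrum_real_eq_range_eigenvalues]
  rintro _ ⟨i, rfl⟩
  exact h i

theorem PosDef.trace_sub_log_det_sub_card {S : Matrix ι ι ℝ} (hS : S.PosDef) :
    S.trace - Real.log S.det - Fintype.card ι =
      ∑ i, (hS.isHermitian.eigenvalues i - 1 - Real.log (hS.isHermitian.eigenvalues i)) := by
  rw [hS.isHermitian.trace_eq_sum_eigenvalues, hS.isHermitian.det_eq_prod_eigenvalues]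
  simp only [RCLike.ofReal_real_eq_id, id_eq]
  rw [Real.log_prod fun i _ ↦ (hS.eigenvalues_pos i).ne', Finset.sum_sub_distrib,
    Finset.sum_sub_distrib]
  simp only [Finset.sum_const, Finset.card_univ, nsmul_eq_mul, mul_one]
  ring

theorem PosDef.eq_one_of_log_det_eq_trace_sub_card {S : Matrix ι ι ℝ} (hS : S.PosDef)
    (h : Real.log S.det = S.trace - Fintype.card ι) : S = 1 :=
  hS.isHermitian.eq_one_of_eigenvalues_eq_one <| Real.eq_one_of_sum_sub_one_sub_log_eq_zero
    hS.eigenvalues_pos <| by rw [← hS.trace_sub_log_det_sub_card]; linarith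

end Matrix

theorem logdet_tangent_equality_case {n : ℕ} (P Q : Matrix (Fin n) (Fin n) ℝ)
    (hP : P.PosDef) (hQ : Q.PosDef)
    (heq : Real.log Q.det = Real.log P.det + (P⁻¹ * (Q - P)).trace) :
    Q = P := by
  set R := CFC.sqrt P
  have hRR : R * R = P := CFC.sqrt_mul_sqrt_self P
  have hR : R.PosDef := hP.posDef_sqrt
  have htrace : (P⁻¹ * (Q - P)).trace = (P⁻¹ * Q).trace - n := by
    rw [Matrix.mul_sub, trace_sub, nonsing_inv_mul P (P.isUnit_iff_isUnit_det.mp hP.isUnit),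
      trace_one, Fintype.card_fin]
  have hS : R⁻¹ * Q * R⁻¹ = 1 := by
    refine (hR.inv_mul_mul_inv hQ).eq_one_of_log_det_eq_trace_sub_card ?_
    rw [det_inv_mul_mul_inv, trace_inv_mul_mul_inv, hRR,
      Real.log_div hQ.det_pos.ne' hP.det_pos.ne', Fintype.card_fin]
    linarith
  rw [eq_mul_self_of_inv_mul_mul_inv_eq_one (R.isUnit_iff_isUnit_det.mp hR.isUnit) hS, hRR]
end
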